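/- For all real numbers $a, b$ with $0 < b \le a \le 2b$, the inequality $(a + b)\left( 1 - h\!\left(\frac{b}{a + b}\right) \right) \le \frac{1}{4}\,(a - b)$ holds. -/

import Mathlib

/-!
With `t = b / (a + b) ∈ [1/3, 1/2]` the claim reads `1 - h t ≤ (1 - 2t) / 4`. The right-hand side
is affine in `t` and `h` is concave, so it suffices to check the two endpoints: at `t = 1/2` both
sides vanish, and at `t = 1/3` the claim is `log₂ 3 ≥ 19/12`, i.e. `3 ^ 12 ≥ 2 ^ 19`.
-/

/-- The binary entropy function in bits: `h x = -x log₂ x - (1-x) log₂ (1-x)`.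
Since `Real.logb 2 0 = 0` in Mathlib, this satisfies `h 0 = h 1 = 0`. -/
noncomputable def binEntropy2 (x : ℝ) : ℝ :=
  -x * Real.logb 2 x - (1 - x) * Real.logb 2 (1 - x)

open Real Set

lemma ConcaveOn.affine_le_of_mem_Icc {f : ℝ → ℝ} {s : Set ℝ} (hf : ConcaveOn ℝ s f)
    {x y z c d : ℝ} (hx : x ∈ s) (hy : y ∈ s) (hz : z ∈ Icc x y)
    (hfx : c * x + d ≤ f x) (hfy : c * y + d ≤ f y) : c * z + d ≤ f z := by
  have haff : ConvexOn ℝ s (fun t => c * t + d) :=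
    ((LinearMap.mulLeft ℝ c).convexOn hf.1).add (convexOn_const d hf.1)
  have hmin := (hf.sub haff).min_le_of_mem_Icc hx hy hz
  simp only [Pi.sub_apply] at hmin
  linarith [le_min (sub_nonneg.2 hfx) (sub_nonneg.2 hfy)]

lemma binEntropy2_eq_binEntropy_div_log_two (x : ℝ) :
    binEntropy2 x = binEntropy x / log 2 := by
  simp only [binEntropy2, binEntropy, logb, log_inv]
  ring

lemma binEntropy_one_third : binEntropy (1 / 3) = log 3 - 2 / 3 * log 2 := by
  rw [binEntropy, show (1 : ℝ) - 1 / 3 = 2 / 3 by norm_num, show ((1 : ℝ) / 3)⁻¹ = 3 by norm_num,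
    show ((2 : ℝ) / 3)⁻¹ = 3 / 2 by norm_num, log_div (by norm_num) (by norm_num)]
  ring

lemma nineteen_mul_log_two_le_twelve_mul_log_three : 19 * log 2 ≤ 12 * log 3 := by
  have h := log_le_log (by positivity) (show (2 : ℝ) ^ 19 ≤ 3 ^ 12 by norm_num)
  rwa [log_pow, log_pow, Nat.cast_ofNat, Nat.cast_ofNat] at h

lemma binEntropy_ge_of_mem_Icc {t : ℝ} (ht : t ∈ Icc (1 / 3) (1 / 2)) :
    log 2 / 2 * t + 3 / 4 * log 2 ≤ binEntropy t :=
  strictConcave_binEntropy.concaveOn.affine_le_of_mem_Icc (by norm_num) (by norm_num) ht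
    (by rw [binEntropy_one_third]; linarith [nineteen_mul_log_two_le_twelve_mul_log_three])
    (by rw [one_div, binEntropy_two_inv]; linarith)

lemma one_sub_binEntropy2_le {t : ℝ} (ht : t ∈ Icc (1 / 3) (1 / 2)) :
    1 - binEntropy2 t ≤ (1 - 2 * t) / 4 := by
  have hlog : 0 < log 2 := log_pos one_lt_two
  have hdiv : 1 / 2 * t + 3 / 4 ≤ binEntropy t / log 2 := by
    rw [le_div_iff₀ hlog]
    linarith [binEntropy_ge_of_mem_Icc ht]
  rw [binEntropy2_eq_binEntropy_div_log_two]
  linarith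

theorem stmt_2 (a b : ℝ) (hb : 0 < b) (hba : b ≤ a) (hab : a ≤ 2 * b) :
    (a + b) * (1 - binEntropy2 (b / (a + b))) ≤ (1 / 4) * (a - b) := by
  have hs : 0 < a + b := by linarith
  have ht : b / (a + b) ∈ Icc (1 / 3) (1 / 2) := by
    constructor
    · rw [le_div_iff₀ hs]; linarith
    · rw [div_le_iff₀ hs]; linarith
  calc (a + b) * (1 - binEntropy2 (b / (a + b)))
      ≤ (a + b) * ((1 - 2 * (b / (a + b))) / 4) :=
        mul_le_mul_of_nonneg_left (one_sub_binEntropy2_le ht) hs.le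
    _ = (1 / 4) * (a - b) := by field_simp; ring
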